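/- Let T = {t₁ < t₂ < ... < t_m} be a nonempty finite set of positive integers and Δb ≥ 1. Define the greedy partition of T as follows: the first part consists of all elements of T in the interval [t₁, t₁ + Δb - 1]; remove them, and repeat on the remaining set. Then the greedy partition achieves the minimum possible number of parts among all partitions of T into subsets each contained in an interval of Δb consecutive integers. -/

import Mathlib

/-- The greedy partition of `T` with windows of length `d`: the first part
consists of all elements of `T` in `[min T, min T + d - 1]`; remove them and
repeat on the remaining set.  (For `d ≥ 1`, `max 1 d = d`.) -/
def greedyParts (d : ℕ) (T : Finset ℕ) : Finset (Finset ℕ) :=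
  if h : T.Nonempty then
    insert (T.filter fun t => t < T.min' h + max 1 d)
      (greedyParts d (T.filter fun t => T.min' h + max 1 d ≤ t))
  else ∅
termination_by T.card
decreasing_by
  exact Finset.card_lt_card <| Finset.filter_ssubset.mpr
    ⟨T.min' h, T.min'_mem h, by
      have : 0 < max 1 d := lt_of_lt_of_le one_pos (le_max_left 1 d)
      omega⟩

/-!
Every window `[a, a + d - 1]` that contains the least element `m` of `T` lies below `m + d`,
which is exactly the cut-off of the first greedy part. So whichever part of an arbitrary cover
contains `m`, the remaining parts still cover everything the greedy algorithm has left to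
process, and induction on `T` shows that the greedy partition uses at most as many parts.
-/

open Finset

def IsWindow (d : ℕ) (p : Finset ℕ) : Prop :=
  ∃ a, p ⊆ Icc a (a + d - 1)

theorem IsWindow.lt_add_of_mem {d : ℕ} {p : Finset ℕ} {m t : ℕ} (hd : 1 ≤ d)
    (hp : IsWindow d p) (hm : m ∈ p) (ht : t ∈ p) : t < m + d := by
  obtain ⟨a, ha⟩ := hp
  have hm' := mem_Icc.1 (ha hm)
  have ht' := mem_Icc.1 (ha ht)
  omega

section greedyParts

variable (d : ℕ)

theorem greedyParts_empty : greedyParts d ∅ = ∅ := by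
  rw [greedyParts]
  simp

theorem greedyParts_of_nonempty {T : Finset ℕ} (hT : T.Nonempty) :
    greedyParts d T = insert (T.filter (· < T.min' hT + max 1 d))
      (greedyParts d (T.filter (T.min' hT + max 1 d ≤ ·))) := by
  rw [greedyParts]
  simp [hT]

theorem filter_min'_add_le_ssubset {T : Finset ℕ} (hT : T.Nonempty) :
    T.filter (T.min' hT + max 1 d ≤ ·) ⊂ T :=
  filter_ssubset.2 ⟨T.min' hT, T.min'_mem hT, by omega⟩

@[elab_as_elim]
theorem greedyParts_induction {motive : Finset ℕ → Prop} (empty : motive ∅)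
    (step : ∀ T (hT : T.Nonempty), motive (T.filter (T.min' hT + max 1 d ≤ ·)) → motive T)
    (T : Finset ℕ) : motive T := by
  induction T using Finset.strongInduction with
  | H T ih =>
    rcases T.eq_empty_or_nonempty with rfl | hT
    · exact empty
    · exact step T hT (ih _ (filter_min'_add_le_ssubset d hT))

variable {d}

theorem subset_of_mem_greedyParts {T p : Finset ℕ} (hp : p ∈ greedyParts d T) : p ⊆ T := by
  induction T using greedyParts_induction d generalizing p with
  | empty => simp [greedyParts_empty] at hp
  | step T hT ih =>
    rw [greedyParts_of_nonempty d hT, mem_insert] at hp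
    rcases hp with rfl | hp
    · exact filter_subset _ _
    · exact (ih hp).trans (filter_subset _ _)

variable (d)

theorem biUnion_greedyParts (T : Finset ℕ) : (greedyParts d T).biUnion id = T := by
  induction T using greedyParts_induction d with
  | empty => simp [greedyParts_empty]
  | step T hT ih =>
    rw [greedyParts_of_nonempty d hT, biUnion_insert, ih, id, ← filter_or]
    exact filter_true_of_mem fun t _ => lt_or_ge _ _

theorem pairwiseDisjoint_greedyParts (T : Finset ℕ) :
    (greedyParts d T : Set (Finset ℕ)).PairwiseDisjoint id := by
  induction T using greedyParts_induction d with
  | empty => simp [greedyParts_empty]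
  | step T hT ih =>
    rw [greedyParts_of_nonempty d hT, coe_insert]
    refine ih.insert fun q hq _ => disjoint_left.2 fun t ht htq => ?_
    have hlt := (mem_filter.1 ht).2
    have hle := (mem_filter.1 (subset_of_mem_greedyParts hq htq)).2
    omega

variable {d}

theorem isWindow_of_mem_greedyParts (hd : 1 ≤ d) {T p : Finset ℕ}
    (hp : p ∈ greedyParts d T) : IsWindow d p := by
  induction T using greedyParts_induction d generalizing p with
  | empty => simp [greedyParts_empty] at hp
  | step T hT ih =>
    rw [greedyParts_of_nonempty d hT, mem_insert] at hp
    rcases hp with rfl | hp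
    · refine ⟨T.min' hT, fun t ht => ?_⟩
      obtain ⟨htT, hlt⟩ := mem_filter.1 ht
      have := T.min'_le t htT
      rw [max_eq_right hd] at hlt
      rw [mem_Icc]
      omega
    · exact ih hp

theorem card_greedyParts_le (hd : 1 ≤ d) {T : Finset ℕ} {parts : Finset (Finset ℕ)}
    (hcover : T ⊆ parts.biUnion id) (hwin : ∀ p ∈ parts, IsWindow d p) :
    (greedyParts d T).card ≤ parts.card := by
  induction T using greedyParts_induction d generalizing parts with
  | empty => simp [greedyParts_empty]
  | step T hT ih =>
    obtain ⟨p₀, hp₀, hmin⟩ := mem_biUnion.1 (hcover (T.min'_mem hT))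
    have hrest : T.filter (T.min' hT + max 1 d ≤ ·) ⊆ (parts.erase p₀).biUnion id := by
      intro t ht
      obtain ⟨htT, hle⟩ := mem_filter.1 ht
      obtain ⟨p, hp, htp⟩ := mem_biUnion.1 (hcover htT)
      refine mem_biUnion.2 ⟨p, mem_erase.2 ⟨?_, hp⟩, htp⟩
      rintro rfl
      have := (hwin p hp).lt_add_of_mem hd hmin htp
      rw [max_eq_right hd] at hle
      omega
    calc (greedyParts d T).card
        ≤ (greedyParts d (T.filter (T.min' hT + max 1 d ≤ ·))).card + 1 := by
          rw [greedyParts_of_nonempty d hT]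
          exact card_insert_le _ _
      _ ≤ (parts.erase p₀).card + 1 := by
          exact Nat.add_le_add_right (ih hrest fun p hp => hwin p (mem_of_mem_erase hp)) 1
      _ = parts.card := card_erase_add_one hp₀

end greedyParts

theorem stmt_13_general (T : Finset ℕ)
    (Δb : ℕ) (hd : 1 ≤ Δb) :
    ((greedyParts Δb T).biUnion id = T ∧
      ((greedyParts Δb T : Set (Finset ℕ))).PairwiseDisjoint id ∧
      (∀ p ∈ greedyParts Δb T, ∃ a, p ⊆ Finset.Icc a (a + Δb - 1))) ∧
    ∀ parts : Finset (Finset ℕ),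
      parts.biUnion id = T →
      (parts : Set (Finset ℕ)).PairwiseDisjoint id →
      (∀ p ∈ parts, ∃ a, p ⊆ Finset.Icc a (a + Δb - 1)) →
      (greedyParts Δb T).card ≤ parts.card :=
  ⟨⟨biUnion_greedyParts Δb T, pairwiseDisjoint_greedyParts Δb T,
      fun _ hp => isWindow_of_mem_greedyParts hd hp⟩,
    fun _ hcover _ hwin => card_greedyParts_le hd hcover.ge hwin⟩

/-- The greedy partition is a valid partition of `T` into parts contained in
intervals of `Δb` consecutive integers, and it achieves the minimum possible
number of parts among all such partitions. -/
theorem stmt_13 (T : Finset ℕ) (hT : T.Nonempty) (hpos : ∀ t ∈ T, 0 < t)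
    (Δb : ℕ) (hd : 1 ≤ Δb) :
    ((greedyParts Δb T).biUnion id = T ∧
      ((greedyParts Δb T : Set (Finset ℕ))).PairwiseDisjoint id ∧
      (∀ p ∈ greedyParts Δb T, ∃ a, p ⊆ Finset.Icc a (a + Δb - 1))) ∧
    ∀ parts : Finset (Finset ℕ),
      parts.biUnion id = T →
      (parts : Set (Finset ℕ)).PairwiseDisjoint id →
      (∀ p ∈ parts, ∃ a, p ⊆ Finset.Icc a (a + Δb - 1)) →
      (greedyParts Δb T).card ≤ parts.card :=
  stmt_13_general T Δb hd
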